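/- arXiv:2103.09470 — 10 statements merged into one kernel-verified Lean document; each statement's English description precedes it below -/
import Mathlib

section
/- Let (X,d) be an ultrametric space with at least two points. If the diametrical graph G_{X,d} is nonempty (has at least one edge), then the relation on X defined by 'u ~ v iff u = v or {u,v} is not an edge of G_{X,d}' is an equivalence relation with at least two equivalence classes, and any two vertices in different classes are adjacent; i.e., G_{X,d} is complete multipartite. -/
/-!
Write `D` for the diameter. Since some pair realises `D > 0`, the space is bounded, so
`dist ≤ D` everywhere and non-adjacency of distinct points means `dist u v < D`. In an
ultrametric space "being at distance `< r`" is transitive, since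
`dist x z ≤ max (dist x y) (dist y z)`; so non-adjacency is an equivalence, the realising
pair lies in two different classes, and distinct classes are adjacent by definition.
-/

open Metric

lemma Metric.isBounded_of_diam_pos {α : Type*} [PseudoMetricSpace α] {s : Set α}
    (h : 0 < diam s) : Bornology.IsBounded s := by
  by_contra hs
  exact h.ne' (diam_eq_zero_of_unbounded hs)

lemma IsUltrametricDist.equivalence_dist_lt {X : Type*} [PseudoMetricSpace X]
    [IsUltrametricDist X] {r : ℝ} (hr : 0 < r) : Equivalence fun x y : X => dist x y < r where
  refl x := by rwa [dist_self]
  symm h := by rwa [dist_comm]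
  trans hxy hyz := (dist_triangle_max _ _ _).trans_lt (max_lt hxy hyz)

lemma Metric.eq_or_dist_ne_diam_univ_iff {X : Type*} [MetricSpace X]
    (hD : 0 < diam (Set.univ : Set X)) (u v : X) :
    u = v ∨ dist u v ≠ diam (Set.univ : Set X) ↔ dist u v < diam (Set.univ : Set X) := by
  have hle : dist u v ≤ diam (Set.univ : Set X) :=
    dist_le_diam_of_mem (isBounded_of_diam_pos hD) (Set.mem_univ u) (Set.mem_univ v)
  constructor
  · rintro (rfl | hne)
    · rwa [dist_self]
    · exact hle.lt_of_ne hne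
  · exact fun hlt => Or.inr hlt.ne

theorem stmt_4_general {X : Type*} [MetricSpace X]
    (hU : ∀ x y z : X, dist x y ≤ max (dist x z) (dist z y))
    (hne : ∃ u v : X, u ≠ v ∧ dist u v = Metric.diam (Set.univ : Set X)) :
    Equivalence (fun u v : X => u = v ∨ dist u v ≠ Metric.diam (Set.univ : Set X)) ∧
    (∃ u v : X, ¬ (u = v ∨ dist u v ≠ Metric.diam (Set.univ : Set X))) ∧
    (∀ u v : X, ¬ (u = v ∨ dist u v ≠ Metric.diam (Set.univ : Set X)) →
      u ≠ v ∧ dist u v = Metric.diam (Set.univ : Set X)) := by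
  obtain ⟨u, v, huv, hd⟩ := hne
  have : IsUltrametricDist X := ⟨fun x y z => hU x z y⟩
  have hD : 0 < diam (Set.univ : Set X) := hd ▸ dist_pos.2 huv
  have hrel : (fun u v : X => u = v ∨ dist u v ≠ diam (Set.univ : Set X)) =
      fun u v => dist u v < diam (Set.univ : Set X) := by
    ext u v
    exact eq_or_dist_ne_diam_univ_iff hD u v
  refine ⟨hrel ▸ IsUltrametricDist.equivalence_dist_lt hD, ⟨u, v, ?_⟩, fun _ _ h => ?_⟩
  · simpa only [not_or, not_not] using ⟨huv, hd⟩
  · simpa only [not_or, not_not] using h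

/-- In an ultrametric space with at least two points, if the diametrical graph is
nonempty, then it is complete multipartite: non-adjacency (with equality) is an
equivalence relation with at least two classes (vertices in distinct classes are
adjacent by definition of the relation). -/
theorem stmt_4 {X : Type*} [MetricSpace X] [Nontrivial X]
    (hU : ∀ x y z : X, dist x y ≤ max (dist x z) (dist z y))
    (hne : ∃ u v : X, u ≠ v ∧ dist u v = Metric.diam (Set.univ : Set X)) :
    Equivalence (fun u v : X => u = v ∨ dist u v ≠ Metric.diam (Set.univ : Set X)) ∧
    (∃ u v : X, ¬ (u = v ∨ dist u v ≠ Metric.diam (Set.univ : Set X))) ∧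
    (∀ u v : X, ¬ (u = v ∨ dist u v ≠ Metric.diam (Set.univ : Set X)) →
      u ≠ v ∧ dist u v = Metric.diam (Set.univ : Set X)) :=
  stmt_4_general hU hne
end

section
/- Let Γ be a nonempty graph (having at least one edge) on vertex set X whose complement contains a connected subgraph with at least 3 vertices (equivalently, there exist three distinct vertices x,y,z with {x,z} and {z,y} non-edges of Γ). Then there exists a metric d on X whose diametrical graph equals Γ and which is not an ultrametric. -/
/-- If `Γ` is a nonempty graph whose complement contains a path of length 2
(three distinct vertices `x, z, y` with `{x,z}` and `{z,y}` non-edges of `Γ`),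
then there is a metric on the vertex set whose diametrical graph equals `Γ`
but which is not an ultrametric. -/
theorem stmt_7 {X : Type*} (Γ : SimpleGraph X)
    (hE : ∃ a b : X, Γ.Adj a b)
    (hP : ∃ x y z : X, x ≠ y ∧ x ≠ z ∧ y ≠ z ∧ ¬ Γ.Adj x z ∧ ¬ Γ.Adj z y) :
    ∃ d : X → X → ℝ,
      (∀ x y : X, d x y = 0 ↔ x = y) ∧
      (∀ x y : X, d x y = d y x) ∧
      (∀ x y z : X, d x y ≤ d x z + d z y) ∧
      (∀ u v : X, (u ≠ v ∧ d u v = sSup {r : ℝ | ∃ x y : X, d x y = r}) ↔ Γ.Adj u v) ∧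
      ¬ (∀ x y z : X, d x y ≤ max (d x z) (d z y)) := by
  classical
  obtain ⟨a, b, hab⟩ := hE
  obtain ⟨x, y, z, hxy, hxz, hyz, hnxz, hnzy⟩ := hP
  set d : X → X → ℝ := fun u v =>
    if u = v then 0 else if Γ.Adj u v then 2
      else if (u = x ∧ v = y) ∨ (u = y ∧ v = x) then 3/2 else 1 with hd
  have hle2 : ∀ u v, d u v ≤ 2 := by
    intro u v
    simp only [hd]
    split_ifs <;> norm_num
  have hge1 : ∀ u v, u ≠ v → 1 ≤ d u v := by
    intro u v huv
    simp only [hd, if_neg huv]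
    split_ifs <;> norm_num
  have hge0 : ∀ u v, 0 ≤ d u v := by
    intro u v
    by_cases h : u = v
    · simp [hd, h]
    · linarith [hge1 u v h]
  have hsymm : ∀ u v, d u v = d v u := by
    intro u v
    by_cases h : u = v
    · simp [hd, h]
    · simp only [hd, if_neg h, if_neg (Ne.symm h), Γ.adj_comm u v]
      by_cases h2 : Γ.Adj v u
      · simp [h2]
      · simp only [if_neg h2]
        congr 1
        exact propext (by tauto)
  have hdab : d a b = 2 := by simp [hd, hab.ne, hab]
  have hS : sSup {r : ℝ | ∃ x y : X, d x y = r} = 2 := by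
    apply le_antisymm
    · apply Real.sSup_le
      · rintro r ⟨u, v, rfl⟩; exact hle2 u v
      · norm_num
    · apply le_csSup
      · exact ⟨2, by rintro r ⟨u, v, rfl⟩; exact hle2 u v⟩
      · exact ⟨a, b, hdab⟩
  refine ⟨d, ?_, hsymm, ?_, ?_, ?_⟩
  · intro u v
    constructor
    · intro h
      by_contra huv
      have := hge1 u v huv
      linarith
    · intro h; simp [hd, h]
  · intro u v w
    by_cases huv : u = v
    · rw [show d u v = 0 from by simp [hd, huv]]
      exact add_nonneg (hge0 u w) (hge0 w v)
    · by_cases hwu : w = u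
      · rw [hwu, show d u u = 0 from by simp [hd], zero_add]
      · by_cases hwv : w = v
        · rw [hwv, show d v v = 0 from by simp [hd], add_zero]
        · have h1 := hge1 u w (Ne.symm hwu)
          have h2 := hge1 w v hwv
          have := hle2 u v
          linarith
  · intro u v
    constructor
    · rintro ⟨huv, hsup⟩
      rw [hS] at hsup
      by_contra hadj
      simp only [hd, if_neg huv, if_neg hadj] at hsup
      split_ifs at hsup <;> norm_num at hsup
    · intro h
      refine ⟨h.ne, ?_⟩
      rw [hS]; simp [hd, h.ne, h]
  · intro H
    have h1 : d x z = 1 := by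
      simp only [hd, if_neg hxz, if_neg hnxz]
      rw [if_neg]
      rintro (⟨h1, h2⟩ | ⟨h1, h2⟩)
      · exact hyz h2.symm
      · exact hxy h1
    have h2 : d z y = 1 := by
      simp only [hd, if_neg (Ne.symm hyz), if_neg hnzy]
      rw [if_neg]
      rintro (⟨h1, h2⟩ | ⟨h1, h2⟩)
      · exact hxz h1.symm
      · exact hxy h2.symm
    have h3 : 3/2 ≤ d x y := by
      simp only [hd, if_neg hxy]
      by_cases ha : Γ.Adj x y
      · rw [if_pos ha]; norm_num
      · rw [if_neg ha, if_pos (by tauto)]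
    have := H x y z
    rw [h1, h2] at this
    simp only [max_self] at this
    linarith
end

section
/- Let (X,d) be a totally bounded ultrametric space with at least two points. Then the diametrical graph G_{X,d} is complete k-partite for some finite integer k ≥ 2; that is, G_{X,d} is nonempty, non-adjacency is an equivalence relation on X with finitely many (at least 2) classes, and vertices in different classes are adjacent. -/
/-- The diametrical graph of a totally bounded ultrametric space with at least two
points is complete `k`-partite for some finite `k ≥ 2`: the graph is nonempty,
non-adjacency (with equality) is an equivalence relation with finitely many and
at least two classes, and vertices in different classes are adjacent. -/
theorem stmt_9 {X : Type*} [MetricSpace X] [Nontrivial X]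
    (hU : ∀ x y z : X, dist x y ≤ max (dist x z) (dist z y))
    (htb : ∀ r : ℝ, 0 < r → ∃ t : Finset X,
      (Set.univ : Set X) ⊆ ⋃ c ∈ t, Metric.ball c r) :
    (∃ u v : X, u ≠ v ∧ dist u v = Metric.diam (Set.univ : Set X)) ∧
    Equivalence (fun u v : X => u = v ∨ dist u v ≠ Metric.diam (Set.univ : Set X)) ∧
    (Set.range (fun u : X =>
      {v : X | v = u ∨ dist v u ≠ Metric.diam (Set.univ : Set X)})).Finite ∧
    (∃ u v : X, ¬ (u = v ∨ dist u v ≠ Metric.diam (Set.univ : Set X))) ∧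
    (∀ u v : X, ¬ (u = v ∨ dist u v ≠ Metric.diam (Set.univ : Set X)) →
      u ≠ v ∧ dist u v = Metric.diam (Set.univ : Set X)) := by
  set D := Metric.diam (Set.univ : Set X) with hDdef
  -- the space is bounded
  obtain ⟨t1, ht1⟩ := htb 1 one_pos
  have hbdd : Bornology.IsBounded (Set.univ : Set X) := by
    refine Bornology.IsBounded.subset ?_ ht1
    exact (Bornology.isBounded_biUnion t1.finite_toSet).2 fun _ _ => Metric.isBounded_ball
  obtain ⟨a, b, hab⟩ := exists_pair_ne X
  have hle : ∀ u v : X, dist u v ≤ D := fun u v =>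
    Metric.dist_le_diam_of_mem hbdd (Set.mem_univ u) (Set.mem_univ v)
  have hDpos : 0 < D := lt_of_lt_of_le (dist_pos.mpr hab) (hle a b)
  -- attainment of the diameter
  have hattain : ∃ u v : X, u ≠ v ∧ dist u v = D := by
    by_contra h
    push_neg at h
    have hne : ∀ u v : X, dist u v ≠ D := by
      intro u v
      rcases eq_or_ne u v with rfl | huv
      · rw [dist_self]; exact hDpos.ne
      · exact h u v huv
    obtain ⟨t, ht⟩ := htb (D / 2) (by linarith)
    have key : ∀ u v c c' : X, D / 2 ≤ dist u v → u ∈ Metric.ball c (D / 2) →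
        v ∈ Metric.ball c' (D / 2) → dist u v = dist c c' := by
      intro u v c c' huv hu hv
      rw [Metric.mem_ball] at hu hv
      have hcu : dist c u < D / 2 := by rw [dist_comm]; exact hu
      have hvc' : dist v c' < D / 2 := hv
      apply le_antisymm
      · -- dist u v ≤ dist c c'
        have h1 : dist u v ≤ max (dist u c) (dist c v) := hU u v c
        have h2 : dist c v ≤ max (dist c c') (dist c' v) := hU c v c'
        have hc'v : dist c' v < D / 2 := by rw [dist_comm]; exact hv
        rcases le_max_iff.mp h1 with h | h
        · linarith
        · rcases le_max_iff.mp (h.trans h2) with h' | h'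
          · exact h'
          · linarith
      · -- dist c c' ≤ dist u v
        have h1 : dist c c' ≤ max (dist c u) (dist u c') := hU c c' u
        have h2 : dist u c' ≤ max (dist u v) (dist v c') := hU u c' v
        rcases le_max_iff.mp h1 with h | h
        · linarith
        · rcases le_max_iff.mp (h.trans h2) with h' | h'
          · exact h'
          · linarith
    -- finite set of candidate distances
    set S : Finset ℝ := (t ×ˢ t).image (fun p => dist p.1 p.2) with hS
    set T : Finset ℝ := insert (D / 2) S with hT
    have hTne : T.Nonempty := ⟨D / 2, Finset.mem_insert_self _ _⟩
    set M : ℝ := T.max' hTne with hM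
    have hMlt : M < D := by
      rw [hM]
      rw [Finset.max'_lt_iff]
      intro x hx
      rcases Finset.mem_insert.mp hx with rfl | hx
      · linarith
      · obtain ⟨p, hp, rfl⟩ := Finset.mem_image.mp hx
        exact lt_of_le_of_ne (hle p.1 p.2) (hne p.1 p.2)
    have hall : ∀ u v : X, dist u v ≤ M := by
      intro u v
      rcases lt_or_ge (dist u v) (D / 2) with hlt | hge
      · exact hlt.le.trans (Finset.le_max' T (D / 2) (Finset.mem_insert_self _ _))
      · obtain ⟨c, hc, hcu⟩ := Set.mem_iUnion₂.mp (ht (Set.mem_univ u))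
        obtain ⟨c', hc', hcv⟩ := Set.mem_iUnion₂.mp (ht (Set.mem_univ v))
        have := key u v c c' hge hcu hcv
        rw [this]
        refine Finset.le_max' T _ (Finset.mem_insert_of_mem ?_)
        exact Finset.mem_image.mpr ⟨(c, c'), Finset.mem_product.mpr ⟨hc, hc'⟩, rfl⟩
    have hMnonneg : 0 ≤ M := by
      have := hall a a
      rw [dist_self] at this
      exact this
    have : D ≤ M := Metric.diam_le_of_forall_dist_le hMnonneg
      (fun x _ y _ => hall x y)
    linarith
  -- equivalence relation
  have hequiv : Equivalence (fun u v : X => u = v ∨ dist u v ≠ D) := by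
    constructor
    · intro x; exact Or.inl rfl
    · intro u v h
      rcases h with rfl | h
      · exact Or.inl rfl
      · exact Or.inr (by rwa [dist_comm])
    · intro u v w h1 h2
      rcases h1 with rfl | h1
      · exact h2
      · rcases h2 with rfl | h2
        · exact Or.inr h1
        · refine Or.inr (ne_of_lt ?_)
          have l1 : dist u v < D := lt_of_le_of_ne (hle u v) h1
          have l2 : dist v w < D := lt_of_le_of_ne (hle v w) h2
          exact lt_of_le_of_lt (hU u w v) (max_lt l1 l2)
  refine ⟨hattain, hequiv, ?_, ?_, ?_⟩
  · -- finitely many classes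
    obtain ⟨t, ht⟩ := htb D hDpos
    set f : X → Set X := fun u => {v : X | v = u ∨ dist v u ≠ D} with hf
    have hRclass : ∀ u v : X, (u = v ∨ dist u v ≠ D) → f u = f v := by
      intro u v huv
      ext w
      simp only [hf, Set.mem_setOf_eq]
      constructor
      · intro hw
        exact hequiv.trans hw huv
      · intro hw
        exact hequiv.trans hw (hequiv.symm huv)
    have hconst : ∀ c : X, ∀ u ∈ Metric.ball c D, f u = f c := by
      intro c u hu
      apply hRclass
      rcases eq_or_ne u c with rfl | huc
      · exact Or.inl rfl
      · refine Or.inr (ne_of_lt ?_)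
        rw [Metric.mem_ball] at hu
        exact lt_of_le_of_lt (hU u c c) (by rw [dist_self]; exact max_lt hu hDpos)
    have hsub : Set.range f ⊆ f '' (t : Set X) := by
      rintro _ ⟨u, rfl⟩
      obtain ⟨c, hc, hcu⟩ := Set.mem_iUnion₂.mp (ht (Set.mem_univ u))
      exact ⟨c, hc, (hconst c u hcu).symm⟩
    exact Set.Finite.subset (t.finite_toSet.image f) hsub
  · obtain ⟨u, v, huv, heq⟩ := hattain
    refine ⟨u, v, ?_⟩
    rintro (rfl | h)
    · exact huv rfl
    · exact h heq
  · intro u v h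
    push_neg at h
    exact h
end

section
/- In a totally bounded ultrametric space (X,d) with at least two points, the diameter is attained: there exist x1, x2 ∈ X with d(x1,x2) = diam X. -/
/-- In a totally bounded ultrametric space with at least two points, the diameter
is attained. -/
theorem stmt_10 {X : Type*} [MetricSpace X] [Nontrivial X]
    (hU : ∀ x y z : X, dist x y ≤ max (dist x z) (dist z y))
    (htb : ∀ r : ℝ, 0 < r → ∃ t : Finset X,
      (Set.univ : Set X) ⊆ ⋃ c ∈ t, Metric.ball c r) :
    ∃ x1 x2 : X, dist x1 x2 = Metric.diam (Set.univ : Set X) := by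
  -- univ is bounded
  obtain ⟨t1, ht1⟩ := htb 1 one_pos
  have hbdd : Bornology.IsBounded (Set.univ : Set X) := by
    refine Bornology.IsBounded.subset ?_ ht1
    exact (Bornology.isBounded_biUnion_finset t1).mpr
      (fun c _ => Metric.isBounded_ball)
  set D := Metric.diam (Set.univ : Set X) with hD
  -- D > 0
  obtain ⟨a, b, hab⟩ := exists_pair_ne X
  have hDpos : 0 < D := by
    have h1 : dist a b ≤ D := Metric.dist_le_diam_of_mem hbdd trivial trivial
    have h2 : 0 < dist a b := dist_pos.mpr hab
    linarith
  obtain ⟨t, ht⟩ := htb (D / 2) (by linarith)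
  have htne : (t ×ˢ t).Nonempty := by
    obtain ⟨c, hc⟩ := Set.mem_iUnion₂.mp (ht (Set.mem_univ a))
    exact ⟨(c, c), Finset.mem_product.mpr ⟨hc.1, hc.1⟩⟩
  set s := (t ×ˢ t).image (fun p => dist p.1 p.2) with hs
  have hsne : s.Nonempty := htne.image _
  obtain ⟨p, hp, hpM⟩ := Finset.mem_image.mp (s.max'_mem hsne)
  set M := dist p.1 p.2 with hM
  have hMD : M ≤ D := Metric.dist_le_diam_of_mem hbdd trivial trivial
  have hkey : ∀ x y : X, dist x y ≤ max (D / 2) M := by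
    intro x y
    obtain ⟨c, hc, hxc⟩ := Set.mem_iUnion₂.mp (ht (Set.mem_univ x))
    obtain ⟨c', hc', hyc'⟩ := Set.mem_iUnion₂.mp (ht (Set.mem_univ y))
    have h1 : dist x y ≤ max (dist x c) (dist c y) := hU x y c
    have h2 : dist c y ≤ max (dist c c') (dist c' y) := hU c y c'
    have h3 : dist c c' ≤ M := by
      exact le_of_le_of_eq
        (s.le_max' _ (Finset.mem_image.mpr ⟨(c, c'), Finset.mem_product.mpr ⟨hc, hc'⟩, rfl⟩))
        hpM.symm
    have h4 : dist x c < D / 2 := Metric.mem_ball.mp hxc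
    have h5 : dist c' y < D / 2 := by
      rw [dist_comm]; exact Metric.mem_ball.mp hyc'
    calc dist x y ≤ max (dist x c) (dist c y) := h1
      _ ≤ max (dist x c) (max (dist c c') (dist c' y)) := by
          exact max_le_max le_rfl h2
      _ ≤ max (D / 2) M := by
          apply max_le
          · exact le_max_of_le_left h4.le
          · exact max_le (le_max_of_le_right h3) (le_max_of_le_left h5.le)
  have hDle : D ≤ max (D / 2) M := by
    refine Metric.diam_le_of_forall_dist_le ?_ (fun x _ y _ => hkey x y)
    exact le_max_of_le_right dist_nonneg
  have hDM : D ≤ M := by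
    rcases le_max_iff.mp hDle with h | h
    · linarith
    · exact h
  exact ⟨p.1, p.2, le_antisymm hMD hDM⟩
end

section
/- For a metric space (X,d) with at least two points, (X,d) is an ultrametric space if and only if for every r with 0 < r ≤ diam X, the graph G^r_{X,d} (edges given by pairs at distance ≥ r) is either empty or complete multipartite. -/
/-- A metric space with at least two points is ultrametric iff for every
`r ∈ (0, diam X]` the graph `G^r` (edges: pairs at distance `≥ r`) is either empty
or complete multipartite (non-adjacency `dist u v < r` is an equivalence relation
with at least two classes; vertices in different classes are at distance `≥ r`). -/
theorem stmt_11 {X : Type*} [MetricSpace X] [Nontrivial X] :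
    (∀ x y z : X, dist x y ≤ max (dist x z) (dist z y)) ↔
      (∀ r : ℝ, 0 < r → ENNReal.ofReal r ≤ EMetric.diam (Set.univ : Set X) →
        ((∀ u v : X, dist u v < r) ∨
          (Equivalence (fun u v : X => dist u v < r) ∧
            (∃ u v : X, r ≤ dist u v) ∧
            (∀ u v : X, ¬ dist u v < r → r ≤ dist u v)))) := by
  constructor
  · intro h r hr _
    by_cases hall : ∀ u v : X, dist u v < r
    · exact Or.inl hall
    · push_neg at hall
      obtain ⟨u, v, huv⟩ := hall
      refine Or.inr ⟨⟨fun x => by simpa using hr, fun {x y} hxy => by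
        simpa [dist_comm] using hxy, fun {x y z} hxy hyz => ?_⟩,
        ⟨u, v, huv⟩, fun u v h' => not_lt.mp h'⟩
      calc dist x z ≤ max (dist x y) (dist y z) := h x z y
        _ < r := max_lt hxy hyz
  · intro h x y z
    by_contra hc
    push_neg at hc
    have hdiam : ENNReal.ofReal (dist x y) ≤ EMetric.diam (Set.univ : Set X) := by
      rw [← edist_dist]
      exact EMetric.edist_le_diam_of_mem (Set.mem_univ x) (Set.mem_univ y)
    have hpos : (0 : ℝ) < dist x y :=
      (dist_nonneg.trans (le_max_left _ _)).trans_lt hc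
    rcases h (dist x y) hpos hdiam with hall | ⟨heq, _, _⟩
    · exact lt_irrefl _ (hall x y)
    · have h1 : dist x z < dist x y := lt_of_le_of_lt (le_max_left _ _) hc
      have h2 : dist z y < dist x y := lt_of_le_of_lt (le_max_right _ _) hc
      exact lt_irrefl _ (heq.trans h1 h2)
end

section
/- Let (X,d) be a metric space with at least two points such that for every r with 0 < r ≤ diam X, the graph on X with edges {u,v} for d(u,v) ≥ r is either empty or complete multipartite. Then d satisfies the strong triangle inequality d(x,y) ≤ max{d(x,z), d(z,y)} for all x,y,z. -/
/-- If for every `r ∈ (0, diam X]` the graph with edges `{u,v}` for `dist u v ≥ r`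
is either empty or complete multipartite, then the metric satisfies the strong
triangle inequality. -/
theorem stmt_12 {X : Type*} [MetricSpace X] [Nontrivial X]
    (h : ∀ r : ℝ, 0 < r → ENNReal.ofReal r ≤ EMetric.diam (Set.univ : Set X) →
      ((∀ u v : X, dist u v < r) ∨
        (Equivalence (fun u v : X => dist u v < r) ∧
          (∃ u v : X, r ≤ dist u v)))) :
    ∀ x y z : X, dist x y ≤ max (dist x z) (dist z y) := by
  intro x y z
  by_contra hc
  push_neg at hc
  have hr0 : 0 < dist x y :=
    lt_of_le_of_lt (le_trans dist_nonneg (le_max_left _ _)) hc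
  have hdiam : ENNReal.ofReal (dist x y) ≤ EMetric.diam (Set.univ : Set X) := by
    rw [← edist_dist]
    exact EMetric.edist_le_diam_of_mem (Set.mem_univ _) (Set.mem_univ _)
  rcases h (dist x y) hr0 hdiam with h1 | ⟨heq, -⟩
  · exact lt_irrefl _ (h1 x y)
  · have hxz : dist x z < dist x y := lt_of_le_of_lt (le_max_left _ _) hc
    have hzy : dist z y < dist x y := lt_of_le_of_lt (le_max_right _ _) hc
    exact lt_irrefl _ (heq.trans hxz hzy)
end

section
/- A metric space (X,d) with at least two points is a totally bounded ultrametric space if and only if for every r with 0 < r ≤ diam X, the graph G^r_{X,d} (vertex set X, edge {u,v} iff d(u,v) ≥ r) is complete k-partite for some finite integer k = k(r) ≥ 2. -/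
/-- A metric space with at least two points is a totally bounded ultrametric space
iff for every `r ∈ (0, diam X]` the graph `G^r` (edges: pairs at distance `≥ r`)
is complete `k`-partite for some finite `k = k(r) ≥ 2`: non-adjacency
`dist u v < r` is an equivalence relation with finitely many, and at least two,
classes. -/
theorem stmt_14 {X : Type*} [MetricSpace X] [Nontrivial X] :
    ((∀ x y z : X, dist x y ≤ max (dist x z) (dist z y)) ∧
      (∀ r : ℝ, 0 < r → ∃ t : Finset X,
        (Set.univ : Set X) ⊆ ⋃ c ∈ t, Metric.ball c r)) ↔
      (∀ r : ℝ, 0 < r → ENNReal.ofReal r ≤ EMetric.diam (Set.univ : Set X) →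
        (Equivalence (fun u v : X => dist u v < r) ∧
          (∃ u v : X, r ≤ dist u v) ∧
          (Set.range (fun u : X => {v : X | dist v u < r})).Finite)) := by
  classical
  constructor
  · rintro ⟨hu, htb⟩ r hr hdiam
    have hcls : ∀ u c : X, dist u c < r →
        {v : X | dist v u < r} = {v : X | dist v c < r} := by
      intro u c huc
      ext v
      simp only [Set.mem_setOf_eq]
      constructor
      · intro hv
        exact lt_of_le_of_lt (hu v c u) (max_lt hv huc)
      · intro hv
        have : dist c u < r := by rwa [dist_comm]
        exact lt_of_le_of_lt (hu v u c) (max_lt hv this)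
    refine ⟨⟨fun x => by simpa using hr, fun {x y} h => by rwa [dist_comm],
        fun {x y z} hxy hyz => lt_of_le_of_lt (hu x z y) (max_lt hxy hyz)⟩, ?_, ?_⟩
    · by_contra hc
      push_neg at hc
      obtain ⟨t, ht⟩ := htb (r/2) (by linarith)
      have hmem : ∀ x : X, ∃ c ∈ t, dist x c < r/2 := by
        intro x
        have := ht (Set.mem_univ x)
        simp only [Set.mem_iUnion, Metric.mem_ball, Finset.mem_coe, exists_prop] at this
        exact this
      have hne : (t ×ˢ t).Nonempty := by
        obtain ⟨x⟩ := (inferInstance : Nonempty X)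
        obtain ⟨c, hct, -⟩ := hmem x
        exact ⟨(c, c), Finset.mem_product.2 ⟨hct, hct⟩⟩
      set M := (t ×ˢ t).sup' hne (fun p => dist p.1 p.2) with hM
      have hMlt : M < r := (Finset.sup'_lt_iff hne).2 (fun p _ => hc p.1 p.2)
      have hbound : ∀ x y : X, dist x y ≤ max (r/2) M := by
        intro x y
        obtain ⟨c, hct, hxc⟩ := hmem x
        obtain ⟨c', hct', hyc'⟩ := hmem y
        have h3 : dist c c' ≤ M :=
          Finset.le_sup' (f := fun p : X × X => dist p.1 p.2)
            (Finset.mem_product.2 ⟨hct, hct'⟩ : (c, c') ∈ t ×ˢ t)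
        have h4 : dist c y ≤ max (r/2) M := by
          refine le_trans (hu c y c') (max_le (le_max_of_le_right h3) ?_)
          rw [dist_comm]
          exact le_max_of_le_left hyc'.le
        exact le_trans (hu x y c) (max_le (le_max_of_le_left hxc.le) h4)
      have hdle : EMetric.diam (Set.univ : Set X) ≤ ENNReal.ofReal (max (r/2) M) :=
        EMetric.diam_le fun x _ y _ => by
          rw [edist_dist]; exact ENNReal.ofReal_le_ofReal (hbound x y)
      have hrm : r ≤ max (r/2) M := by
        have := le_trans hdiam hdle
        exact (ENNReal.ofReal_le_ofReal_iff
          (le_max_of_le_left (by linarith))).1 this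
      have : max (r/2) M < r := max_lt (by linarith) hMlt
      linarith
    · obtain ⟨t, ht⟩ := htb r hr
      apply Set.Finite.subset
        (Set.Finite.image (fun c => {v : X | dist v c < r}) t.finite_toSet)
      rintro s ⟨u, rfl⟩
      have := ht (Set.mem_univ u)
      simp only [Set.mem_iUnion, Metric.mem_ball, Finset.mem_coe] at this
      obtain ⟨c, hct, huc⟩ := this
      exact ⟨c, hct, (hcls u c huc).symm⟩
  · intro h
    constructor
    · intro x y z
      by_contra hxy
      push_neg at hxy
      set r := dist x y with hrdef
      have h1 : dist x z < r := lt_of_le_of_lt (le_max_left _ _) hxy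
      have h2 : dist z y < r := lt_of_le_of_lt (le_max_right _ _) hxy
      have hr : 0 < r := lt_of_le_of_lt dist_nonneg h1
      have hdiam : ENNReal.ofReal r ≤ EMetric.diam (Set.univ : Set X) := by
        rw [hrdef, ← edist_dist]
        exact EMetric.edist_le_diam_of_mem (Set.mem_univ x) (Set.mem_univ y)
      obtain ⟨heq, -, -⟩ := h r hr hdiam
      exact lt_irrefl r (heq.trans h1 h2)
    · intro r hr
      rcases le_or_gt (ENNReal.ofReal r) (EMetric.diam (Set.univ : Set X)) with hd | hd
      · obtain ⟨heq, -, hfin⟩ := h r hr hd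
        set f : X → Set X := fun u => {v : X | dist v u < r} with hf
        refine ⟨hfin.toFinset.image (Function.invFun f), fun x _ => ?_⟩
        simp only [Set.mem_iUnion, Metric.mem_ball, Finset.mem_coe,
          Finset.mem_image, Set.Finite.mem_toFinset]
        refine ⟨Function.invFun f (f x), ⟨f x, Set.mem_range_self x, rfl⟩, ?_⟩
        have hfx : f (Function.invFun f (f x)) = f x := Function.invFun_eq ⟨x, rfl⟩
        have hx : x ∈ f x := by simp only [hf, Set.mem_setOf_eq, dist_self]; exact hr
        rw [← hfx] at hx
        exact hx
      · obtain ⟨x0⟩ := (inferInstance : Nonempty X)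
        refine ⟨{x0}, fun x _ => ?_⟩
        simp only [Set.mem_iUnion, Metric.mem_ball, Finset.mem_coe, Finset.mem_singleton]
        refine ⟨x0, rfl, ?_⟩
        have := lt_of_le_of_lt (EMetric.edist_le_diam_of_mem (Set.mem_univ x) (Set.mem_univ x0)) hd
        rw [edist_dist] at this
        exact (ENNReal.ofReal_lt_ofReal_iff hr).1 this
end

section
/- Let (X,d) be an unbounded ultrametric space, let d* > 0, and define ρ(x,y) = d*·d(x,y)/(1 + d(x,y)). Then ρ is a bounded ultrametric on X with diam(X,ρ) = d*, and the diametrical graph of (X,ρ) is empty, i.e., ρ(x,y) < d* for all x,y ∈ X. -/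
/-- If `(X, d)` is an unbounded ultrametric space, `d* > 0`, and
`ρ(x,y) = d* ⬝ d(x,y) / (1 + d(x,y))`, then `ρ` is an ultrametric on `X` with
`diam (X, ρ) = d*` and the diametrical graph of `(X, ρ)` is empty:
`ρ(x,y) < d*` for all `x, y`. -/
theorem stmt_15 {X : Type*} [MetricSpace X]
    (hU : ∀ x y z : X, dist x y ≤ max (dist x z) (dist z y))
    (hunb : ∀ C : ℝ, ∃ x y : X, C < dist x y)
    (dstar : ℝ) (hd : 0 < dstar)
    (ρ : X → X → ℝ)
    (hρ : ∀ x y : X, ρ x y = dstar * dist x y / (1 + dist x y)) :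
    (∀ x y : X, 0 ≤ ρ x y) ∧
    (∀ x y : X, ρ x y = 0 ↔ x = y) ∧
    (∀ x y : X, ρ x y = ρ y x) ∧
    (∀ x y z : X, ρ x y ≤ max (ρ x z) (ρ z y)) ∧
    IsLUB {r : ℝ | ∃ x y : X, ρ x y = r} dstar ∧
    (∀ x y : X, ρ x y < dstar) := by
  have hpos : ∀ x y : X, (0:ℝ) < 1 + dist x y := fun x y => by positivity
  have mono : ∀ a b : ℝ, 0 ≤ a → a ≤ b →
      dstar * a / (1 + a) ≤ dstar * b / (1 + b) := by
    intro a b ha hab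
    have h1 : (0:ℝ) < 1 + a := by linarith
    have h2 : (0:ℝ) < 1 + b := by linarith
    rw [div_le_div_iff₀ h1 h2]
    nlinarith
  have hlt : ∀ x y : X, ρ x y < dstar := by
    intro x y
    rw [hρ]
    rw [div_lt_iff₀ (hpos x y)]
    nlinarith [dist_nonneg (x := x) (y := y)]
  have hnn : ∀ x y : X, 0 ≤ ρ x y := by
    intro x y; rw [hρ]; positivity
  refine ⟨hnn, ?_, ?_, ?_, ?_, hlt⟩
  · intro x y
    rw [hρ]
    constructor
    · intro h
      have := hpos x y
      have hdxy : dist x y = 0 := by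
        rw [div_eq_zero_iff] at h
        rcases h with h | h
        · rcases mul_eq_zero.mp h with h | h
          · exact absurd h hd.ne'
          · exact h
        · exact absurd h (hpos x y).ne'
      exact dist_eq_zero.mp hdxy
    · intro h; subst h; simp
  · intro x y; rw [hρ, hρ, dist_comm]
  · intro x y z
    rw [hρ, hρ, hρ]
    rcases le_total (dist x z) (dist z y) with h | h
    · refine le_trans ?_ (le_max_right _ _)
      exact mono _ _ dist_nonneg (le_trans (hU x y z) (by simp [h]))
    · refine le_trans ?_ (le_max_left _ _)
      exact mono _ _ dist_nonneg (le_trans (hU x y z) (by simp [h]))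
  · constructor
    · rintro r ⟨x, y, rfl⟩
      exact (hlt x y).le
    · intro u hu
      by_contra hcon
      push_neg at hcon
      obtain ⟨x0, y0, _⟩ := hunb 0
      have h0 : (0:ℝ) ≤ u := hu ⟨x0, x0, by rw [hρ]; simp⟩
      have hε : 0 < dstar - u := by linarith
      obtain ⟨x, y, hxy⟩ := hunb (u / (dstar - u))
      have hd' : 0 ≤ dist x y := dist_nonneg
      have : u < ρ x y := by
        rw [hρ, lt_div_iff₀ (hpos x y)]
        have : u / (dstar - u) < dist x y := hxy
        rw [div_lt_iff₀ hε] at this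
        nlinarith
      exact absurd (hu ⟨x, y, rfl⟩) (not_le.mpr this)
end

section
/- Let (X,ρ) be a bounded ultrametric space with at least two points whose diametrical graph is empty (i.e., ρ(x,y) < d* := diam(X,ρ) for all x,y). Then d(x,y) := ρ(x,y)/(d* − ρ(x,y)) defines an unbounded ultrametric on X satisfying ρ(x,y) = d*·d(x,y)/(1 + d(x,y)) for all x,y. -/
/-!
The transform `t ↦ t / (D - t)` is an increasing bijection from `[0, D)` onto `[0, ∞)` with
inverse `u ↦ D u / (1 + u)`. Composing an ultrametric with an increasing map gives an
ultrametric, since the strong triangle inequality only compares distances. Because the diameter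
`D` is the supremum of `ρ` but is never attained, `ρ` takes values arbitrarily close to `D`, so
the transformed metric is unbounded.
-/

open Metric Set

theorem ultrametric_comp_of_monotoneOn {X : Type*} {g : X → X → ℝ} {f : ℝ → ℝ} {s : Set ℝ}
    (hg : ∀ x y z, g x y ≤ max (g x z) (g z y)) (hf : MonotoneOn f s) (hs : ∀ x y, g x y ∈ s)
    (x y z : X) : f (g x y) ≤ max (f (g x z)) (f (g z y)) := by
  rw [← hf.map_max (hs x z) (hs z y)]
  have hmax : max (g x z) (g z y) ∈ s := by
    rcases max_choice (g x z) (g z y) with h | h <;> rw [h] <;> exact hs _ _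
  exact hf (hs x y) hmax (hg x y z)

theorem exists_lt_dist_of_lt_diam_univ {X : Type*} [PseudoMetricSpace X] {r : ℝ} (hr : 0 ≤ r)
    (h : r < diam (univ : Set X)) : ∃ x y : X, r < dist x y := by
  by_contra! H
  exact h.not_ge (diam_le_of_forall_dist_le hr fun x _ y _ => H x y)

section DivSubSelf

variable {D t : ℝ}

theorem strictMonoOn_div_sub_self (hD : 0 < D) : StrictMonoOn (fun t => t / (D - t)) (Iio D) := by
  intro s hs t ht hst
  simp only [mem_Iio] at hs ht
  rw [div_lt_div_iff₀ (sub_pos.2 hs) (sub_pos.2 ht)]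
  nlinarith

theorem lt_div_sub_self_iff {u : ℝ} (ht : t < D) (hu : -1 < u) :
    u < t / (D - t) ↔ D * u / (1 + u) < t := by
  rw [lt_div_iff₀ (sub_pos.2 ht), div_lt_iff₀ (by linarith)]
  have : t * (1 + u) - D * u = t - u * (D - t) := by ring
  constructor <;> intro <;> linarith

theorem mul_div_sub_self_div_one_add (hD : D ≠ 0) (ht : t ≠ D) :
    D * (t / (D - t)) / (1 + t / (D - t)) = t := by
  have : D - t ≠ 0 := sub_ne_zero.2 ht.symm
  rw [one_add_div this, sub_add_cancel]
  field_simp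

end DivSubSelf

theorem stmt_16_general {X : Type*} [MetricSpace X] [Nontrivial X]
    (hU : ∀ x y z : X, dist x y ≤ max (dist x z) (dist z y))
    (hemp : ∀ x y : X, dist x y < Metric.diam (Set.univ : Set X))
    (d : X → X → ℝ)
    (hd : ∀ x y : X, d x y =
      dist x y / (Metric.diam (Set.univ : Set X) - dist x y)) :
    (∀ x y : X, 0 ≤ d x y) ∧
    (∀ x y : X, d x y = 0 ↔ x = y) ∧
    (∀ x y : X, d x y = d y x) ∧
    (∀ x y z : X, d x y ≤ max (d x z) (d z y)) ∧
    (∀ C : ℝ, ∃ x y : X, C < d x y) ∧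
    (∀ x y : X, dist x y =
      Metric.diam (Set.univ : Set X) * d x y / (1 + d x y)) := by
  set D := diam (univ : Set X)
  obtain ⟨x₀, -, -⟩ := exists_pair_ne X
  have hD : 0 < D := by simpa using hemp x₀ x₀
  have hgap : ∀ x y : X, 0 < D - dist x y := fun x y => sub_pos.2 (hemp x y)
  refine ⟨fun x y => ?_, fun x y => ?_, fun x y => ?_, fun x y z => ?_, fun C => ?_,
    fun x y => ?_⟩
  · rw [hd]
    exact div_nonneg dist_nonneg (hgap x y).le
  · rw [hd, div_eq_zero_iff, or_iff_left (hgap x y).ne', dist_eq_zero]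
  · rw [hd, hd, dist_comm]
  · simpa only [hd] using
      ultrametric_comp_of_monotoneOn hU (strictMonoOn_div_sub_self hD).monotoneOn hemp x y z
  · set C' := max C 0
    have hC' : 0 ≤ C' := le_max_right C 0
    obtain ⟨x, y, hxy⟩ := exists_lt_dist_of_lt_diam_univ (r := D * C' / (1 + C'))
      (by positivity) (by rw [div_lt_iff₀ (by positivity), mul_one_add]; linarith)
    refine ⟨x, y, (le_max_left C 0).trans_lt ?_⟩
    rw [hd, lt_div_sub_self_iff (hemp x y) (by linarith)]
    exact hxy
  · rw [hd, mul_div_sub_self_div_one_add hD.ne' (hemp x y).ne]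

/-- If `(X, ρ)` is a bounded ultrametric space with at least two points whose
diametrical graph is empty (`ρ(x,y) < d* := diam X` for all `x, y`), then
`d(x,y) = ρ(x,y) / (d* − ρ(x,y))` is an unbounded ultrametric on `X` with
`ρ(x,y) = d* ⬝ d(x,y) / (1 + d(x,y))`. -/
theorem stmt_16 {X : Type*} [MetricSpace X] [Nontrivial X]
    (hU : ∀ x y z : X, dist x y ≤ max (dist x z) (dist z y))
    (hb : Bornology.IsBounded (Set.univ : Set X))
    (hemp : ∀ x y : X, dist x y < Metric.diam (Set.univ : Set X))
    (d : X → X → ℝ)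
    (hd : ∀ x y : X, d x y =
      dist x y / (Metric.diam (Set.univ : Set X) - dist x y)) :
    (∀ x y : X, 0 ≤ d x y) ∧
    (∀ x y : X, d x y = 0 ↔ x = y) ∧
    (∀ x y : X, d x y = d y x) ∧
    (∀ x y z : X, d x y ≤ max (d x z) (d z y)) ∧
    (∀ C : ℝ, ∃ x y : X, C < d x y) ∧
    (∀ x y : X, dist x y =
      Metric.diam (Set.univ : Set X) * d x y / (1 + d x y)) :=
  stmt_16_general hU hemp d hd
end

section
/- Let (X,d) be an ultrametric space with at least two points whose diametrical graph is empty. Then (X,d) is weakly similar to an unbounded ultrametric space: there exists an unbounded ultrametric space (Y,ρ) and a bijection Φ: X → Y with a strictly increasing bijection ψ: D(Y) → D(X) satisfying d(x,y) = ψ(ρ(Φ(x),Φ(y))) for all x,y ∈ X. -/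
/-!
If the distance set `D(X)` is unbounded, the identity works. Otherwise let `S = sup D(X)`; since
no pair realizes the diameter, every distance lies in `[0, S)`, and `S > 0` because `X` has two
points. The strictly increasing bijection `t ↦ t / (S - t)` of `[0, S)` onto `[0, ∞)` turns `d`
into an ultrametric (increasing maps preserve the strong triangle inequality), and it is unbounded
on `D(X)` because `D(X)` accumulates at `S`. Its inverse `s ↦ S s / (1 + s)` is the required `ψ`.
-/

universe u

open Set

section Reparametrization

variable {X : Type*} [MetricSpace X] {f ψ : ℝ → ℝ}

lemma monotone_comp_dist_of_leftInverse (hψ : StrictMonoOn ψ (Ici 0))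
    (hf_nonneg : ∀ x y : X, 0 ≤ f (dist x y)) (hψf : ∀ x y : X, ψ (f (dist x y)) = dist x y)
    {a b c d : X} (h : dist a b ≤ dist c d) : f (dist a b) ≤ f (dist c d) := by
  by_contra! hlt
  have := hψ (hf_nonneg c d) (hf_nonneg a b) hlt
  rw [hψf, hψf] at this
  linarith

theorem unbounded_weaklySimilar_comp_dist_of_leftInverse
    (hU : ∀ x y z : X, dist x y ≤ max (dist x z) (dist z y))
    (hψ : StrictMonoOn ψ (Ici 0)) (hf0 : f 0 = 0)
    (hf_nonneg : ∀ x y : X, 0 ≤ f (dist x y)) (hψf : ∀ x y : X, ψ (f (dist x y)) = dist x y)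
    (hψ_lt : ∀ s, 0 ≤ s → ∃ x y : X, ψ s < dist x y) :
    let ρ : X → X → ℝ := fun x y => f (dist x y)
    (∀ a b : X, 0 ≤ ρ a b) ∧
      (∀ a b : X, ρ a b = 0 ↔ a = b) ∧
      (∀ a b : X, ρ a b = ρ b a) ∧
      (∀ a b c : X, ρ a b ≤ max (ρ a c) (ρ c b)) ∧
      (∀ C : ℝ, ∃ a b : X, C < ρ a b) ∧
      BijOn ψ {r : ℝ | ∃ a b : X, ρ a b = r} {r : ℝ | ∃ a b : X, dist a b = r} ∧
      StrictMonoOn ψ {r : ℝ | ∃ a b : X, ρ a b = r} ∧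
      (∀ x y : X, dist x y = ψ (ρ x y)) := by
  intro ρ
  have hmono {a b c d : X} (h : dist a b ≤ dist c d) : ρ a b ≤ ρ c d :=
    monotone_comp_dist_of_leftInverse hψ hf_nonneg hψf h
  have himage : {r : ℝ | ∃ a b : X, ρ a b = r} ⊆ Ici 0 := by
    rintro _ ⟨a, b, rfl⟩
    exact hf_nonneg a b
  refine ⟨hf_nonneg, fun a b => ⟨fun h => ?_, ?_⟩, fun a b => by simp only [ρ, dist_comm],
    fun a b c => ?_, fun C => ?_, ⟨?_, hψ.injOn.mono himage, ?_⟩, hψ.mono himage,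
    fun x y => (hψf x y).symm⟩
  · have h' : f (dist a b) = f (dist a a) := by rw [dist_self, hf0]; exact h
    rw [← dist_eq_zero, ← hψf a b, h', hψf, dist_self]
  · rintro rfl
    simp [ρ, hf0]
  · rcases le_total (dist a c) (dist c b) with h | h
    · exact (hmono ((hU a b c).trans_eq (max_eq_right h))).trans (le_max_right _ _)
    · exact (hmono ((hU a b c).trans_eq (max_eq_left h))).trans (le_max_left _ _)
  · obtain ⟨a, b, hab⟩ := hψ_lt (max C 0) (le_max_right _ _)
    rw [← hψf a b] at hab
    exact ⟨a, b, (le_max_left C 0).trans_lt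
      ((hψ.lt_iff_lt (le_max_right C 0) (hf_nonneg a b)).mp hab)⟩
  · rintro _ ⟨a, b, rfl⟩
    exact ⟨a, b, (hψf a b).symm⟩
  · rintro _ ⟨a, b, rfl⟩
    exact ⟨ρ a b, ⟨a, b, rfl⟩, hψf a b⟩

end Reparametrization

section Compression

variable {S : ℝ}

lemma strictMonoOn_mul_div_one_add (hS : 0 < S) :
    StrictMonoOn (fun s : ℝ => S * s / (1 + s)) (Ici 0) := by
  intro a ha b hb hab
  have ha' : (0 : ℝ) < 1 + a := by linarith [mem_Ici.mp ha]
  have hb' : (0 : ℝ) < 1 + b := by linarith [mem_Ici.mp hb]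
  simp only
  rw [div_lt_div_iff₀ ha' hb']
  nlinarith

lemma mul_div_one_add_lt (hS : 0 < S) {s : ℝ} (hs : 0 ≤ s) : S * s / (1 + s) < S := by
  rw [div_lt_iff₀ (by linarith)]
  linarith

lemma mul_div_one_add_div_sub {t : ℝ} (ht0 : 0 ≤ t) (ht : t < S) :
    S * (t / (S - t)) / (1 + t / (S - t)) = t := by
  have h : S - t ≠ 0 := by linarith
  have hS : S ≠ 0 := by linarith
  field_simp
  ring_nf
  field_simp

end Compression

lemma dist_lt_sSup_of_forall_ne {X : Type*} [MetricSpace X] [Nontrivial X]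
    (hemp : ∀ u v : X, u ≠ v → dist u v ≠ sSup {r : ℝ | ∃ a b : X, dist a b = r})
    (hbdd : BddAbove {r : ℝ | ∃ a b : X, dist a b = r}) (x y : X) :
    dist x y < sSup {r : ℝ | ∃ a b : X, dist a b = r} := by
  obtain ⟨u, v, huv⟩ := exists_pair_ne X
  have hS := dist_nonneg.trans_lt ((le_csSup hbdd ⟨u, v, rfl⟩).lt_of_ne (hemp u v huv))
  rcases eq_or_ne x y with rfl | hxy
  · simpa using hS
  · exact (le_csSup hbdd ⟨x, y, rfl⟩).lt_of_ne (hemp x y hxy)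

/-- An ultrametric space with at least two points whose diametrical graph is empty
is weakly similar to an unbounded ultrametric space. -/
theorem stmt_19 {X : Type u} [MetricSpace X] [Nontrivial X]
    (hU : ∀ x y z : X, dist x y ≤ max (dist x z) (dist z y))
    (hemp : ∀ u v : X, u ≠ v →
      dist u v ≠ sSup {r : ℝ | ∃ a b : X, dist a b = r}) :
    ∃ (Y : Type u) (ρ : Y → Y → ℝ) (Φ : X → Y) (ψ : ℝ → ℝ),
      (∀ a b : Y, 0 ≤ ρ a b) ∧
      (∀ a b : Y, ρ a b = 0 ↔ a = b) ∧
      (∀ a b : Y, ρ a b = ρ b a) ∧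
      (∀ a b c : Y, ρ a b ≤ max (ρ a c) (ρ c b)) ∧
      (∀ C : ℝ, ∃ a b : Y, C < ρ a b) ∧
      Function.Bijective Φ ∧
      Set.BijOn ψ {r : ℝ | ∃ a b : Y, ρ a b = r} {r : ℝ | ∃ a b : X, dist a b = r} ∧
      StrictMonoOn ψ {r : ℝ | ∃ a b : Y, ρ a b = r} ∧
      (∀ x y : X, dist x y = ψ (ρ (Φ x) (Φ y))) := by
  set D := {r : ℝ | ∃ a b : X, dist a b = r}
  by_cases hbdd : BddAbove D
  · obtain ⟨u⟩ := (inferInstance : Nonempty X)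
    set S := sSup D
    have hlt := dist_lt_sSup_of_forall_ne hemp hbdd
    have hS : 0 < S := by simpa using hlt u u
    obtain ⟨hρ0, hρ, hsymm, hρU, hunb, hbij, hψ, hdist⟩ :=
      unbounded_weaklySimilar_comp_dist_of_leftInverse (f := fun t => t / (S - t))
        (ψ := fun s => S * s / (1 + s)) hU (strictMonoOn_mul_div_one_add hS) (by simp)
        (fun x y => div_nonneg dist_nonneg (sub_nonneg.2 (hlt x y).le))
        (fun x y => mul_div_one_add_div_sub dist_nonneg (hlt x y))
        (fun s hs => by
          obtain ⟨_, ⟨x, y, rfl⟩, h⟩ := exists_lt_of_lt_csSup (s := D) ⟨_, u, u, rfl⟩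
            (mul_div_one_add_lt hS hs)
          exact ⟨x, y, h⟩)
    exact ⟨X, _, id, _, hρ0, hρ, hsymm, hρU, hunb, Function.bijective_id, hbij, hψ, hdist⟩
  · obtain ⟨hρ0, hρ, hsymm, hρU, hunb, hbij, hψ, hdist⟩ :=
      unbounded_weaklySimilar_comp_dist_of_leftInverse (f := id) (ψ := id) hU strictMonoOn_id rfl
        (fun _ _ => dist_nonneg) (fun _ _ => rfl)
        (fun s _ => by
          obtain ⟨_, ⟨x, y, rfl⟩, h⟩ := not_bddAbove_iff.mp hbdd s
          exact ⟨x, y, h⟩)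
    exact ⟨X, _, id, _, hρ0, hρ, hsymm, hρU, hunb, Function.bijective_id, hbij, hψ, hdist⟩
end
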